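/- Every derivation of the matrix algebra M_n(ℂ) is inner, i.e., for every ℂ-linear map D : M_n(ℂ) → M_n(ℂ) satisfying D(ab) = D(a)b + aD(b) there exists a matrix x ∈ M_n(ℂ) such that D(a) = x*a - a*x for all a. -/

import Mathlib

open Matrix

/-- Every derivation of the matrix algebra `Mₙ(ℂ)` is inner. -/
theorem matrix_derivation_inner (n : ℕ)
    (D : Matrix (Fin n) (Fin n) ℂ →ₗ[ℂ] Matrix (Fin n) (Fin n) ℂ)
    (hD : ∀ a b : Matrix (Fin n) (Fin n) ℂ, D (a * b) = D a * b + a * D b) :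
    ∃ x : Matrix (Fin n) (Fin n) ℂ,
      ∀ a : Matrix (Fin n) (Fin n) ℂ, D a = x * a - a * x := by
  cases n with
  | zero => exact ⟨0, fun a => Subsingleton.elim _ _⟩
  | succ m =>
    set E : Fin (m+1) → Fin (m+1) → Matrix (Fin (m+1)) (Fin (m+1)) ℂ :=
      fun i j => Matrix.single i j 1 with hEdef
    have hmul : ∀ i j k l : Fin (m+1), E i j * E k l = if j = k then E i l else 0 := by
      intro i j k l
      by_cases h : j = k
      · subst h; simp [hEdef]
      · simp [hEdef, h]
    have hone : (1 : Matrix (Fin (m+1)) (Fin (m+1)) ℂ) = ∑ k, E k k := by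
      conv_lhs => rw [matrix_eq_sum_single (1 : Matrix (Fin (m+1)) (Fin (m+1)) ℂ)]
      refine Finset.sum_congr rfl fun i _ => ?_
      rw [Finset.sum_eq_single i]
      · simp [hEdef]
      · intro j _ hj
        rw [Matrix.one_apply_ne (Ne.symm hj), single_zero]
      · simp
    set z : Fin (m+1) := 0 with hz
    set x : Matrix (Fin (m+1)) (Fin (m+1)) ℂ := ∑ k, D (E k z) * E z k with hx
    have hEzz : E z z * E z z = E z z := by rw [hmul]; simp
    have he2 : ∀ y, E z z * (E z z * y) = E z z * y := fun y => by rw [← mul_assoc, hEzz]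
    have hDzz : D (E z z) = D (E z z) * E z z + E z z * D (E z z) := by
      conv_lhs => rw [← hEzz, hD]
    have hP : E z z * D (E z z) * E z z = 0 := by
      have h2 : E z z * D (E z z) * E z z
          = E z z * D (E z z) * E z z + E z z * D (E z z) * E z z := by
        conv_lhs => rw [hDzz]
        simp only [mul_add, add_mul, mul_assoc, hEzz, he2]
      exact left_eq_add.mp h2
    have h1 : ∀ i j, D (E i j) = x * E i j - E i j * x := by
      intro i j
      have hxE : x * E i j = D (E i z) * E z j := by
        rw [hx, Finset.sum_mul]
        rw [Finset.sum_eq_single i]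
        · rw [mul_assoc, hmul]; simp
        · intro k _ hk
          rw [mul_assoc, hmul]
          simp [hk]
        · simp
      have hrel : ∀ k, E z j * D (E k z)
          = (if j = k then D (E z z) else 0) - D (E z j) * E k z := by
        intro k
        have h3 : E z j * E k z = if j = k then E z z else 0 := hmul z j k z
        have h4 : D (E z j * E k z) = D (E z j) * E k z + E z j * D (E k z) := hD _ _
        rw [h3] at h4
        by_cases h : j = k
        · subst h
          rw [if_pos rfl] at h4 ⊢
          rw [eq_sub_iff_add_eq]
          exact (h4.trans (add_comm _ _)).symm
        · rw [if_neg h] at h4 ⊢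
          rw [map_zero] at h4
          rw [eq_sub_iff_add_eq]
          exact (h4.trans (add_comm _ _)).symm
      have hsum1 : ∑ k, E k z * E z k = 1 := by
        rw [hone]
        refine Finset.sum_congr rfl fun k _ => ?_
        rw [hmul]; simp
      have hEiz : E i z * E z z = E i z := by rw [hmul]; simp
      have hEzj : E z z * E z j = E z j := by rw [hmul]; simp
      have hEx : E i j * x = E i z * D (E z z) * E z j - E i z * D (E z j) := by
        rw [hx, Finset.mul_sum]
        have hsplit : ∀ k, E i j * (D (E k z) * E z k)
            = E i z * ((if j = k then D (E z z) else 0) * E z k)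
              - E i z * (D (E z j) * (E k z * E z k)) := by
          intro k
          have hij : E i j = E i z * E z j := by rw [hmul]; simp
          rw [hij, mul_assoc, ← mul_assoc (E z j), hrel k, sub_mul, mul_sub,
            mul_assoc (D (E z j))]
        simp only [hsplit]
        rw [Finset.sum_sub_distrib, ← Finset.mul_sum, ← Finset.mul_sum, ← Finset.mul_sum,
          hsum1, mul_one]
        congr 1
        rw [Finset.sum_eq_single j]
        · simp [mul_assoc]
        · intro k _ hk; simp [(Ne.symm hk : j ≠ k)]
        · simp
      have hzero : E i z * D (E z z) * E z j = 0 := by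
        have key : E i z * D (E z z) * E z j = E i z * (E z z * D (E z z) * E z z) * E z j := by
          conv_lhs => rw [← hEiz, ← hEzj]
          simp only [mul_assoc]
        rw [key, hP]; simp
      have hDij : D (E i j) = D (E i z) * E z j + E i z * D (E z j) := by
        have hij : E i j = E i z * E z j := by rw [hmul]; simp
        rw [hij, hD]
      rw [hxE, hEx, hzero, hDij]
      abel
    refine ⟨x, fun a => ?_⟩
    have ha : a = ∑ i, ∑ j, a i j • E i j := by
      conv_lhs => rw [matrix_eq_sum_single a]
      refine Finset.sum_congr rfl fun i _ => Finset.sum_congr rfl fun j _ => ?_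
      ext i' j'
      simp [hEdef, Matrix.single]
    rw [ha]
    simp only [map_sum, LinearMap.map_smul, h1, smul_sub, Finset.mul_sum, Finset.sum_mul,
      mul_smul_comm, smul_mul_assoc, ← Finset.sum_sub_distrib]
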